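/- Let $G$ be a mixed graph with directed and undirected edges, with generic parameter matrices $\Lambda$ (directed edges) and $K$ (undirected part), and $\Sigma = \Lambda^{-\top}K^{-1}\Lambda^{-1}$. Let $A, B$ be vertex sets with $\#A = \#B = r$. If every system of $r$ treks from $A$ to $B$ in $G$ has a sided crossing, then for every pair of subsets $S, T \subseteq V(G)$ with $\#S = \#T = r$, the product $\det(\Lambda^{-\top})_{A,S}\cdot \det(K^{-1})_{S,T}\cdot \det(\Lambda^{-1})_{T,B}$ is identically zero; consequently $\det\Sigma_{A,B} = 0$ by the Cauchy–Binet expansion. -/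

import Mathlib

/-!
A minor of `Σ = Λ⁻ᵀ K⁻¹ Λ⁻¹` expands by Cauchy–Binet into products of minors of the three
factors. Up to transposition and diagonal scaling, each factor is `M⁻¹` for a matrix `M = I - N`
supported on the diagonal and the edges of one side of the graph; `M` is invertible over power
series because its constant term is `I`. By Jacobi's theorem a minor of `M⁻¹` is a unit multiple
of the complementary minor of `M`. If the latter is nonzero, some permutation contributes a
nonzero term, and following it traces out vertex-disjoint paths from the row set to the column
set of the minor of `M⁻¹`. Were all three minors in a product nonzero, the three path systems
would glue into a system of treks from `A` to `B` without a sided crossing.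
-/

open Matrix

/-- A path, as the list of its vertices, from `i` to `j`. -/
def IsPath {V : Type*} (E : V → V → Prop) (p : List V) (i j : V) : Prop :=
  p.head? = some i ∧ p.getLast? = some j ∧ p.Chain' E

/-- The minor of an `m × m` matrix with rows indexed by `A` and columns by `B`
(both listed in increasing order); junk value `0` if `#A ≠ #B`. -/
noncomputable def subdet {m : ℕ} {R : Type*} [CommRing R]
    (M : Matrix (Fin m) (Fin m) R) (A B : Finset (Fin m)) : R :=
  if h : A.card = B.card then
    (M.submatrix (fun i : Fin A.card => ((A.orderIsoOfFin rfl) i).1)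
      (fun i : Fin A.card => ((B.orderIsoOfFin h.symm) i).1)).det
  else 0

/-- The parameter ring: a variable for each directed edge, each undirected edge,
and each vertex (the entries of `D⁻¹`). -/
abbrev MixRing (m : ℕ) : Type :=
  MvPowerSeries ((Fin m × Fin m) ⊕ (Sym2 (Fin m) ⊕ Fin m)) ℝ

/-- `Λ = I - L`, with `L` the generic matrix of the directed edges. -/
noncomputable def LamMix (m : ℕ) (Dir : Fin m → Fin m → Prop) [DecidableRel Dir] :
    Matrix (Fin m) (Fin m) (MixRing m) :=
  1 - Matrix.of (fun a b =>
    if Dir a b then MvPowerSeries.X (Sum.inl (a, b)) else 0)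

/-- `K⁻¹ = D⁻¹ (I - Ψ)⁻¹ D⁻¹`: the generic inverse concentration matrix of the
undirected part, with `Ψ` the symmetric matrix of undirected-edge indeterminates
and `D⁻¹` a generic diagonal matrix. -/
noncomputable def KinvMix (m : ℕ) (Und : Fin m → Fin m → Prop) [DecidableRel Und] :
    Matrix (Fin m) (Fin m) (MixRing m) :=
  Matrix.diagonal (fun i => MvPowerSeries.X (Sum.inr (Sum.inr i)))
    * ((1 : Matrix (Fin m) (Fin m) (MixRing m)) - Matrix.of (fun i j =>
        if Und i j then MvPowerSeries.X (Sum.inr (Sum.inl s(i, j))) else 0))⁻¹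
    * Matrix.diagonal (fun i => MvPowerSeries.X (Sum.inr (Sum.inr i)))

variable {R : Type*} [CommRing R]

namespace Finset

variable {n : Type*} [LinearOrder n]

theorem bijective_orderEmbOfFin_comp_perm {r : ℕ} :
    Function.Bijective fun x : {S : Finset n // S.card = r} × Equiv.Perm (Fin r) =>
      (⟨x.1.1.orderEmbOfFin x.1.2 ∘ x.2,
        (x.1.1.orderEmbOfFin x.1.2).injective.comp x.2.injective⟩ :
          {p : Fin r → n // Function.Injective p}) := by
  constructor
  · rintro ⟨⟨S, hS⟩, σ⟩ ⟨⟨S', hS'⟩, σ'⟩ h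
    have hp := congrArg Subtype.val h
    obtain rfl : S = S' := by
      have := congrArg Set.range hp
      simp only [EquivLike.range_comp, range_orderEmbOfFin] at this
      exact_mod_cast this
    obtain rfl : σ = σ' := Equiv.ext fun i => (S.orderEmbOfFin hS).injective (congrFun hp i)
    rfl
  · rintro ⟨p, hp⟩
    have hS : (univ.image p).card = r := by
      rw [card_image_of_injective _ hp, card_univ, Fintype.card_fin]
    let e := (univ.image p).orderIsoOfFin hS
    let σ : Fin r → Fin r := fun i => e.symm ⟨p i, mem_image_of_mem p (mem_univ i)⟩
    have hσ : Function.Injective σ := fun i j hij =>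
      hp (congrArg Subtype.val (e.symm.injective hij))
    refine ⟨(⟨_, hS⟩, Equiv.ofBijective σ (Finite.injective_iff_bijective.mp hσ)), ?_⟩
    ext i
    simp [σ, e, ← coe_orderIsoOfFin_apply]

variable [Fintype n] {k k' : ℕ}

def finSumComplEquiv (S : Finset n) (hS : S.card = k) (hSc : Sᶜ.card = k') :
    Fin k ⊕ Fin k' ≃ n :=
  (Equiv.sumCongr (S.orderIsoOfFin hS).toEquiv
    ((Sᶜ.orderIsoOfFin hSc).toEquiv.trans (Equiv.subtypeEquivRight fun _ => mem_compl))).trans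
    (Equiv.sumCompl (· ∈ S))

@[simp]
theorem finSumComplEquiv_inl (S : Finset n) (hS : S.card = k) (hSc : Sᶜ.card = k') (i : Fin k) :
    S.finSumComplEquiv hS hSc (.inl i) = S.orderEmbOfFin hS i := by
  simp [finSumComplEquiv]

@[simp]
theorem finSumComplEquiv_inr (S : Finset n) (hS : S.card = k) (hSc : Sᶜ.card = k') (i : Fin k') :
    S.finSumComplEquiv hS hSc (.inr i) = Sᶜ.orderEmbOfFin hSc i := by
  simp [finSumComplEquiv]

end Finset

namespace Matrix

section CauchyBinet

variable {r : ℕ} {n : Type*} [Fintype n]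

theorem det_mul_eq_sum_det_submatrix_mul_prod (P : Matrix (Fin r) n R) (Q : Matrix n (Fin r) R) :
    (P * Q).det = ∑ p : Fin r → n, (P.submatrix id p).det * ∏ i, Q (p i) i := by
  classical
  have hrows : (P * Q)ᵀ = fun i => ∑ k, Q k i • Pᵀ k := by
    ext i j
    simp [mul_apply, mul_comm]
  rw [← det_transpose, hrows]
  refine (detRowAlternating.toMultilinearMap.map_sum fun i k => Q k i • Pᵀ k).trans ?_
  refine Finset.sum_congr rfl fun p _ => ?_
  rw [MultilinearMap.map_smul_univ, smul_eq_mul, mul_comm, ← det_transpose]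
  rfl

/-- **Cauchy–Binet formula.** -/
theorem det_mul_eq_sum_det_mul_det [LinearOrder n] (P : Matrix (Fin r) n R)
    (Q : Matrix n (Fin r) R) :
    (P * Q).det = ∑ S : {S : Finset n // S.card = r},
      (P.submatrix id (S.1.orderEmbOfFin S.2)).det
        * (Q.submatrix (S.1.orderEmbOfFin S.2) id).det := by
  set F : (Fin r → n) → R := fun p => (P.submatrix id p).det * ∏ i, Q (p i) i
  have hF : ∀ p, F p ≠ 0 → Function.Injective p := by
    intro p hp
    by_contra hni
    obtain ⟨i, j, hpij, hij⟩ := Function.not_injective_iff.mp hni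
    exact hp (mul_eq_zero_of_left (det_zero_of_column_eq hij fun k => by simp [hpij]) _)
  have hminors : ∀ S : {S : Finset n // S.card = r},
      (P.submatrix id (S.1.orderEmbOfFin S.2)).det * (Q.submatrix (S.1.orderEmbOfFin S.2) id).det
        = ∑ σ : Equiv.Perm (Fin r), F (S.1.orderEmbOfFin S.2 ∘ σ) := by
    intro S
    rw [(Q.submatrix _ id).det_apply', Finset.mul_sum]
    refine Finset.sum_congr rfl fun σ _ => ?_
    rw [show F (S.1.orderEmbOfFin S.2 ∘ σ) = ((P.submatrix id (S.1.orderEmbOfFin S.2)).submatrix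
        id σ).det * ∏ i, Q (S.1.orderEmbOfFin S.2 (σ i)) i from rfl, det_permute']
    simp only [submatrix_apply, id_eq]
    ring
  rw [det_mul_eq_sum_det_submatrix_mul_prod, Fintype.sum_congr _ _ hminors,
    ← Fintype.sum_prod_type', ← Finset.sum_filter_of_ne fun p _ hp => hF p hp,
    Finset.sum_subtype (p := Function.Injective) _ (fun p => by simp) F]
  exact (Fintype.sum_bijective _ Finset.bijective_orderEmbOfFin_comp_perm _ _ fun _ => rfl).symm

end CauchyBinet

section Jacobi

variable {ι κ n : Type*} [Fintype ι] [Fintype κ] [Fintype n]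
  [DecidableEq ι] [DecidableEq κ] [DecidableEq n]

theorem isUnit_det_submatrix_equiv {M : Matrix n n R} (hM : IsUnit M.det) (e₁ e₂ : ι ≃ n) :
    IsUnit (M.submatrix e₁ e₂).det := by
  rw [show M.submatrix e₁ e₂ = (M.submatrix e₁ e₁).submatrix id (e₂.trans e₁.symm) by ext; simp,
    det_permute', det_submatrix_equiv_self]
  exact ((Equiv.Perm.sign _).isUnit.map (Int.castRingHom R)).mul hM

/-- **Jacobi's complementary minor theorem**, up to a unit. -/
theorem exists_isUnit_mul_det_submatrix_inv {M : Matrix n n R} (hM : IsUnit M.det)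
    (eS eT : ι ⊕ κ ≃ n) : ∃ u : R, IsUnit u ∧
      u * (M⁻¹.submatrix (eS ∘ Sum.inl) (eT ∘ Sum.inl)).det
        = (M.submatrix (eT ∘ Sum.inr) (eS ∘ Sum.inr)).det := by
  set M' := M.submatrix eT eS
  set M'' := M⁻¹.submatrix eS eT
  have hinv : M' * M'' = 1 := by
    rw [submatrix_mul_equiv, mul_nonsing_inv _ hM, submatrix_one_equiv]
  rw [← fromBlocks_toBlocks M', ← fromBlocks_toBlocks M'', fromBlocks_multiply, ← fromBlocks_one,
    fromBlocks_inj] at hinv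
  obtain ⟨h₁₁, -, h₂₁, -⟩ := hinv
  -- Replace the columns of `M''` indexed by `κ` with unit vectors.
  have hN : M' * fromBlocks M''.toBlocks₁₁ 0 M''.toBlocks₂₁ 1
      = fromBlocks 1 M'.toBlocks₁₂ 0 M'.toBlocks₂₂ := by
    rw [← fromBlocks_toBlocks M', fromBlocks_multiply]
    simp [h₁₁, h₂₁]
  refine ⟨M'.det, isUnit_det_submatrix_equiv hM eT eS, ?_⟩
  calc M'.det * (M⁻¹.submatrix (eS ∘ Sum.inl) (eT ∘ Sum.inl)).det
      = (M' * fromBlocks M''.toBlocks₁₁ 0 M''.toBlocks₂₁ 1).det := by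
        rw [det_mul, det_fromBlocks_zero₁₂, det_one, mul_one]
        rfl
    _ = (M.submatrix (eT ∘ Sum.inr) (eS ∘ Sum.inr)).det := by
        rw [hN, det_fromBlocks_zero₂₁, det_one, one_mul]
        rfl

end Jacobi

theorem exists_perm_forall_ne_zero_of_det_ne_zero {n : Type*} [Fintype n] [DecidableEq n]
    {M : Matrix n n R} (h : M.det ≠ 0) : ∃ σ : Equiv.Perm n, ∀ i, M (σ i) i ≠ 0 := by
  obtain ⟨σ, -, hσ⟩ := Finset.exists_ne_zero_of_sum_ne_zero (M.det_apply ▸ h)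
  exact ⟨σ, fun i hi => hσ (by
    rw [Finset.prod_eq_zero (f := fun i => M (σ i) i) (Finset.mem_univ i) hi, smul_zero])⟩

end Matrix

theorem MvPowerSeries.isUnit_det_one_sub {n σ : Type*} [Fintype n] [DecidableEq n]
    {N : Matrix n n (MvPowerSeries σ R)} (hN : ∀ i j, constantCoeff (N i j) = 0) :
    IsUnit (1 - N).det := by
  have : (1 - N).map constantCoeff = 1 := by
    ext i j
    by_cases h : i = j <;> simp [hN, one_apply, h]
  rw [isUnit_iff_constantCoeff, RingHom.map_det, RingHom.mapMatrix_apply, this, det_one]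
  exact isUnit_one

theorem eq_or_rel_of_one_sub_ite_apply_ne_zero {n : Type*} [DecidableEq n] {E : n → n → Prop}
    [DecidableRel E] {x : n → n → R} {v w : n}
    (h : (1 - of fun a b => if E a b then x a b else 0 : Matrix n n R) v w ≠ 0) :
    v = w ∨ E v w := by
  by_contra! hvw
  exact h (by simp [hvw.1, hvw.2])

section Subdet

variable {m : ℕ}

theorem subdet_eq_det_submatrix {k : ℕ} (M : Matrix (Fin m) (Fin m) R) {A B : Finset (Fin m)}
    (hA : A.card = k) (hB : B.card = k) :
    subdet M A B = (M.submatrix (A.orderEmbOfFin hA) (B.orderEmbOfFin hB)).det := by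
  subst hA
  rw [subdet, dif_pos hB.symm]
  rfl

theorem subdet_transpose (M : Matrix (Fin m) (Fin m) R) (A B : Finset (Fin m)) :
    subdet Mᵀ A B = subdet M B A := by
  by_cases hAB : A.card = B.card
  · rw [subdet_eq_det_submatrix _ hAB rfl, subdet_eq_det_submatrix _ rfl hAB,
      ← transpose_submatrix, det_transpose]
  · rw [subdet, subdet, dif_neg hAB, dif_neg (Ne.symm hAB)]

theorem subdet_mul (M N : Matrix (Fin m) (Fin m) R) {A B : Finset (Fin m)}
    (hAB : A.card = B.card) :
    subdet (M * N) A B = ∑ S ∈ Finset.univ.powersetCard A.card, subdet M A S * subdet N S B := by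
  rw [subdet_eq_det_submatrix _ rfl hAB.symm, submatrix_mul _ _ _ id _ Function.bijective_id,
    det_mul_eq_sum_det_mul_det, Finset.sum_subtype _ fun S => Finset.mem_powersetCard_univ]
  refine Fintype.sum_congr _ _ fun S => ?_
  rw [subdet_eq_det_submatrix _ rfl S.2, subdet_eq_det_submatrix _ S.2 hAB.symm]
  rfl

theorem subdet_mul_mul_eq_zero {P K L : Matrix (Fin m) (Fin m) R} {A B : Finset (Fin m)}
    (hAB : A.card = B.card) (h : ∀ S T : Finset (Fin m), S.card = A.card → T.card = A.card →
      subdet P A S * subdet K S T * subdet L T B = 0) :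
    subdet (P * K * L) A B = 0 := by
  rw [subdet_mul _ _ hAB]
  refine Finset.sum_eq_zero fun T hT => ?_
  rw [Finset.mem_powersetCard_univ] at hT
  rw [subdet_mul _ _ hT.symm, Finset.sum_mul]
  exact Finset.sum_eq_zero fun S hS => h S T (Finset.mem_powersetCard_univ.mp hS) hT

theorem subdet_diagonal_mul_mul_diagonal_eq_zero (d d' : Fin m → R)
    (M : Matrix (Fin m) (Fin m) R) {S T : Finset (Fin m)} (h : subdet M S T = 0) :
    subdet (diagonal d * M * diagonal d') S T = 0 := by
  by_cases hST : S.card = T.card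
  · rw [subdet_eq_det_submatrix _ rfl hST.symm] at h ⊢
    have : (diagonal d * M * diagonal d').submatrix (S.orderEmbOfFin rfl)
          (T.orderEmbOfFin hST.symm)
        = diagonal (d ∘ S.orderEmbOfFin rfl)
          * M.submatrix (S.orderEmbOfFin rfl) (T.orderEmbOfFin hST.symm)
          * diagonal (d' ∘ T.orderEmbOfFin hST.symm) := by
      ext i j
      simp [mul_diagonal, diagonal_mul]
    rw [this, det_mul, det_mul, h, mul_zero, zero_mul]
  · rw [subdet, dif_neg hST]

end Subdet

structure DisjointPaths {n : Type*} (E : n → n → Prop) (X Y : Finset n) where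
  path : n → List n
  target : n → n
  isPath : ∀ s ∈ X, IsPath E (path s) s (target s)
  target_mem : ∀ s ∈ X, target s ∈ Y
  disjoint : ∀ s ∈ X, ∀ t ∈ X, s ≠ t → ∀ v ∈ path s, v ∉ path t

namespace DisjointPaths

variable {n : Type*} {E : n → n → Prop} {X Y : Finset n}

theorem target_mem_path (P : DisjointPaths E X Y) {s : n} (hs : s ∈ X) : P.target s ∈ P.path s :=
  List.mem_of_getLast? (P.isPath s hs).2.1

theorem injOn_target (P : DisjointPaths E X Y) : Set.InjOn P.target X := by
  intro s hs t ht hst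
  by_contra hne
  exact P.disjoint s hs t ht hne _ (P.target_mem_path hs) (hst ▸ P.target_mem_path ht)

theorem surjOn_target (P : DisjointPaths E X Y) (hXY : Y.card ≤ X.card) :
    Set.SurjOn P.target X Y :=
  Finset.surjOn_of_injOn_of_card_le P.target P.target_mem P.injOn_target hXY

end DisjointPaths

section Iterate

variable {n : Type*} {f : n → n} {X Y : Finset n}

theorem iterate_eq_iterate_of_injOn (hX : ∀ v ∉ Y, f v ∉ X) (hinj : Set.InjOn f (↑Y)ᶜ)
    {s t : n} (hs : s ∈ X) (ht : t ∈ X) (a b : ℕ) (ha : ∀ i < a, f^[i] s ∉ Y)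
    (hb : ∀ i < b, f^[i] t ∉ Y) (hab : f^[a] s = f^[b] t) : a = b ∧ s = t := by
  induction a generalizing b with
  | zero =>
    cases b with
    | zero => exact ⟨rfl, hab⟩
    | succ b =>
      rw [Function.iterate_succ_apply'] at hab
      exact absurd (hab ▸ hs) (hX _ (hb b b.lt_succ_self))
  | succ a ih =>
    cases b with
    | zero =>
      rw [Function.iterate_succ_apply'] at hab
      exact absurd (hab ▸ ht) (hX _ (ha a a.lt_succ_self))
    | succ b =>
      rw [Function.iterate_succ_apply', Function.iterate_succ_apply'] at hab
      have := ih b (fun i hi => ha i (by omega)) (fun i hi => hb i (by omega))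
        (hinj (ha a a.lt_succ_self) (hb b b.lt_succ_self) hab)
      exact ⟨congrArg Nat.succ this.1, this.2⟩

theorem exists_iterate_mem_of_injOn [Finite n] (hX : ∀ v ∉ Y, f v ∉ X)
    (hinj : Set.InjOn f (↑Y)ᶜ) {s : n} (hs : s ∈ X) : ∃ k, f^[k] s ∈ Y := by
  by_contra! h
  obtain ⟨a, b, hne, hab⟩ := Finite.exists_ne_map_eq_of_infinite fun k => f^[k] s
  exact hne
    (iterate_eq_iterate_of_injOn hX hinj hs hs a b (fun i _ => h i) (fun i _ => h i) hab).1

/-- Following `f` from each vertex of `X` until it first enters `Y` gives disjoint paths. -/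
theorem nonempty_disjointPaths_of_injOn [Finite n] [DecidableEq n] {E : n → n → Prop}
    (hX : ∀ v ∉ Y, f v ∉ X) (hinj : Set.InjOn f (↑Y)ᶜ) (hE : ∀ v ∉ Y, v = f v ∨ E v (f v)) :
    Nonempty (DisjointPaths E X Y) := by
  classical
  let k : n → ℕ := fun s => if hs : ∃ k, f^[k] s ∈ Y then Nat.find hs else 0
  have hk : ∀ s ∈ X, f^[k s] s ∈ Y ∧ ∀ i < k s, f^[i] s ∉ Y := by
    intro s hs
    have hex := exists_iterate_mem_of_injOn hX hinj hs
    simp only [k, dif_pos hex]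
    exact ⟨Nat.find_spec hex, fun i hi => Nat.find_min hex hi⟩
  have mem_path : ∀ s v, v ∈ (List.range (k s + 1)).map (f^[·] s) ↔ ∃ i ≤ k s, f^[i] s = v :=
    fun s v => by simp only [List.mem_map, List.mem_range, Nat.lt_succ_iff]
  refine ⟨⟨fun s => (List.range (k s + 1)).map (f^[·] s), fun s => f^[k s] s,
    fun s hs => ⟨by rw [List.head?_map, List.head?_range]; rfl,
      by rw [List.getLast?_map, List.getLast?_range]; rfl, ?_⟩,
    fun s hs => (hk s hs).1, ?_⟩⟩
  · rw [List.Chain', List.isChain_map, List.isChain_range_succ]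
    intro i hi
    rw [Function.iterate_succ_apply']
    refine (hE _ ((hk s hs).2 i hi)).resolve_left fun hfix => ?_
    have := iterate_eq_iterate_of_injOn hX hinj hs hs i (i + 1)
      (fun j hj => (hk s hs).2 j (by omega)) (fun j hj => (hk s hs).2 j (by omega))
      (by rw [Function.iterate_succ_apply', ← hfix])
    omega
  · intro s hs t ht hst v hvs hvt
    obtain ⟨a, ha, rfl⟩ := (mem_path s v).1 hvs
    obtain ⟨b, hb, hab⟩ := (mem_path t _).1 hvt
    exact hst (iterate_eq_iterate_of_injOn hX hinj hs ht a b
      (fun i hi => (hk s hs).2 i (by omega)) (fun i hi => (hk t ht).2 i (by omega)) hab.symm).2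

end Iterate

/-- The half of the Gessel–Viennot–Lindström lemma needed here: a nonzero term in the expansion
of the minor is a permutation whose orbits trace out disjoint `E`-paths. -/
theorem nonempty_disjointPaths_of_det_submatrix_ne_zero {ι κ n : Type*} [Fintype κ]
    [DecidableEq κ] [Fintype n] [DecidableEq n] {E : n → n → Prop} {G : Matrix n n R}
    (hG : ∀ v w, G v w ≠ 0 → v = w ∨ E v w) {S T : Finset n} (eS eT : ι ⊕ κ ≃ n)
    (hS : ∀ j, eS (.inr j) ∉ S) (hT : ∀ i, eT (.inl i) ∈ T)
    (h : (G.submatrix (eT ∘ Sum.inr) (eS ∘ Sum.inr)).det ≠ 0) :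
    Nonempty (DisjointPaths E S T) := by
  obtain ⟨σ, hσ⟩ := Matrix.exists_perm_forall_ne_zero_of_det_ne_zero h
  have hTc : ∀ v ∉ T, ∃ j, eT (.inr j) = v := by
    intro v hv
    rcases hj : eT.symm v with i | j
    · exact absurd (eT.symm_apply_eq.mp hj ▸ hT i) hv
    · exact ⟨j, (eT.symm_apply_eq.mp hj).symm⟩
  let f : n → n := fun v => Sum.elim (fun _ => v) (fun j => eS (.inr (σ.symm j))) (eT.symm v)
  have hf : ∀ j, f (eT (.inr j)) = eS (.inr (σ.symm j)) := fun j => by simp [f]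
  refine nonempty_disjointPaths_of_injOn (f := f) ?_ ?_ ?_
  · intro v hv
    obtain ⟨j, rfl⟩ := hTc v hv
    rw [hf]
    exact hS _
  · intro v hv w hw hvw
    obtain ⟨j, rfl⟩ := hTc v hv
    obtain ⟨j', rfl⟩ := hTc w hw
    rw [hf, hf, eS.apply_eq_iff_eq, Sum.inr.injEq, σ.symm.apply_eq_iff_eq] at hvw
    rw [hvw]
  · intro v hv
    obtain ⟨j, rfl⟩ := hTc v hv
    rw [hf]
    exact hG _ _ (by simpa using hσ (σ.symm j))

theorem nonempty_disjointPaths_of_subdet_inv_ne_zero {m : ℕ} {E : Fin m → Fin m → Prop}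
    {M : Matrix (Fin m) (Fin m) R} (hM : IsUnit M.det) (hE : ∀ v w, M v w ≠ 0 → v = w ∨ E v w)
    {S T : Finset (Fin m)} (h : subdet M⁻¹ S T ≠ 0) : Nonempty (DisjointPaths E S T) := by
  have hST : S.card = T.card := by
    by_contra hST
    exact h (by rw [subdet, dif_neg hST])
  have hSc : Sᶜ.card = m - S.card := by rw [Finset.card_compl, Fintype.card_fin]
  have hTc : Tᶜ.card = m - S.card := by rw [Finset.card_compl, Fintype.card_fin, hST]
  let eS := S.finSumComplEquiv rfl hSc
  let eT := T.finSumComplEquiv hST.symm hTc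
  obtain ⟨u, hu, hJ⟩ := Matrix.exists_isUnit_mul_det_submatrix_inv hM eS eT
  refine nonempty_disjointPaths_of_det_submatrix_ne_zero hE eS eT
    (fun j => by simpa [eS] using Finset.mem_compl.mp (Sᶜ.orderEmbOfFin_mem hSc j))
    (fun i => by simp [eT]) ?_
  rw [← hJ, hu.mul_right_eq_zero.ne]
  rwa [subdet_eq_det_submatrix _ rfl hST.symm] at h

/-- Disjoint path systems on the three sides glue, through the bijections between their endpoint
sets, into a system of treks from `A` to `B` without sided crossings. -/
theorem exists_treks_of_disjointPaths {n : Type*} [LinearOrder n] {Dir Und : n → n → Prop}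
    {A B S T : Finset n} (hB : B.card = A.card) (hS : A.card ≤ S.card)
    (L : DisjointPaths Dir S A) (M : DisjointPaths Und S T) (R : DisjointPaths Dir T B) :
    ∃ (τ : Equiv.Perm (Fin A.card)) (PL PM PR : Fin A.card → List n) (sL sR : Fin A.card → n),
      (∀ i, IsPath Dir (PL i) (sL i) (A.orderEmbOfFin rfl i) ∧ IsPath Und (PM i) (sL i) (sR i)
        ∧ IsPath Dir (PR i) (sR i) (B.orderEmbOfFin hB (τ i)))
      ∧ (∀ i j, i ≠ j → ∀ v ∈ PL i, v ∉ PL j) ∧ (∀ i j, i ≠ j → ∀ v ∈ PM i, v ∉ PM j)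
      ∧ (∀ i j, i ≠ j → ∀ v ∈ PR i, v ∉ PR j) := by
  choose sL hsL hLsL using fun i => L.surjOn_target hS (A.orderEmbOfFin_mem rfl i)
  have hsL_inj : Function.Injective sL := fun i j hij =>
    (A.orderEmbOfFin rfl).injective (by rw [← hLsL, ← hLsL, hij])
  let sR := fun i => M.target (sL i)
  have hsR : ∀ i, sR i ∈ T := fun i => M.target_mem _ (hsL i)
  have hsR_inj : Function.Injective sR := fun i j hij =>
    hsL_inj (M.injOn_target (hsL i) (hsL j) hij)
  have hb : ∀ i, R.target (sR i) ∈ B := fun i => R.target_mem _ (hsR i)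
  let g := fun i => (B.orderIsoOfFin hB).symm ⟨R.target (sR i), hb i⟩
  have hg : Function.Injective g := fun i j hij =>
    hsR_inj (R.injOn_target (hsR i) (hsR j) (congrArg Subtype.val ((OrderIso.injective _) hij)))
  let τ := Equiv.ofBijective g (Finite.injective_iff_bijective.mp hg)
  have hτ : ∀ i, B.orderEmbOfFin hB (τ i) = R.target (sR i) := fun i => by
    simp [τ, g, ← Finset.coe_orderIsoOfFin_apply]
  refine ⟨τ, fun i => L.path (sL i), fun i => M.path (sL i), fun i => R.path (sR i), sL, sR,
    fun i => ⟨hLsL i ▸ L.isPath _ (hsL i), M.isPath _ (hsL i), hτ i ▸ R.isPath _ (hsR i)⟩,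
    fun i j hij => L.disjoint _ (hsL i) _ (hsL j) (hsL_inj.ne hij),
    fun i j hij => M.disjoint _ (hsL i) _ (hsL j) (hsL_inj.ne hij),
    fun i j hij => R.disjoint _ (hsR i) _ (hsR j) (hsR_inj.ne hij)⟩

section MixedGraph

variable {m : ℕ}

theorem nonempty_disjointPaths_of_subdet_inv_one_sub_ne_zero {σ : Type*}
    {E : Fin m → Fin m → Prop} [DecidableRel E] (x : Fin m → Fin m → σ) {S T : Finset (Fin m)}
    (h : subdet (1 - of fun a b => if E a b then MvPowerSeries.X (x a b) else 0 :
      Matrix (Fin m) (Fin m) (MvPowerSeries σ R))⁻¹ S T ≠ 0) :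
    Nonempty (DisjointPaths E S T) := by
  set N : Matrix (Fin m) (Fin m) (MvPowerSeries σ R) :=
    of fun a b => if E a b then MvPowerSeries.X (x a b) else 0
  have hN : ∀ i j, MvPowerSeries.constantCoeff (N i j) = 0 := fun i j => by
    by_cases h : E i j <;> simp [N, h]
  exact nonempty_disjointPaths_of_subdet_inv_ne_zero (MvPowerSeries.isUnit_det_one_sub hN)
    (fun _ _ => eq_or_rel_of_one_sub_ite_apply_ne_zero) h

theorem nonempty_disjointPaths_of_subdet_lamMix_inv_ne_zero {Dir : Fin m → Fin m → Prop}
    [DecidableRel Dir] {S T : Finset (Fin m)} (h : subdet (LamMix m Dir)⁻¹ S T ≠ 0) :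
    Nonempty (DisjointPaths Dir S T) :=
  nonempty_disjointPaths_of_subdet_inv_one_sub_ne_zero (fun a b => Sum.inl (a, b)) h

theorem nonempty_disjointPaths_of_subdet_kinvMix_ne_zero {Und : Fin m → Fin m → Prop}
    [DecidableRel Und] {S T : Finset (Fin m)} (h : subdet (KinvMix m Und) S T ≠ 0) :
    Nonempty (DisjointPaths Und S T) :=
  nonempty_disjointPaths_of_subdet_inv_one_sub_ne_zero (fun a b => Sum.inr (Sum.inl s(a, b)))
    (mt (subdet_diagonal_mul_mul_diagonal_eq_zero _ _ _) h)

end MixedGraph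

theorem stmt19_general (m : ℕ) (Dir Und : Fin m → Fin m → Prop)
    [DecidableRel Dir] [DecidableRel Und]
    (A B : Finset (Fin m)) (hAB : A.card = B.card)
    (hcross : ∀ (τ : Equiv.Perm (Fin A.card))
        (PL PM PR : Fin A.card → List (Fin m)) (sL sR : Fin A.card → Fin m),
        (∀ i, IsPath Dir (PL i) (sL i) ((A.orderIsoOfFin rfl) i).1
          ∧ IsPath Und (PM i) (sL i) (sR i)
          ∧ IsPath Dir (PR i) (sR i) ((B.orderIsoOfFin hAB.symm) (τ i)).1) →
        (∃ i j, i ≠ j ∧ ∃ v, v ∈ PL i ∧ v ∈ PL j)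
          ∨ (∃ i j, i ≠ j ∧ ∃ v, v ∈ PM i ∧ v ∈ PM j)
          ∨ (∃ i j, i ≠ j ∧ ∃ v, v ∈ PR i ∧ v ∈ PR j)) :
    (∀ S T : Finset (Fin m), S.card = A.card → T.card = A.card →
      subdet (((LamMix m Dir)⁻¹)ᵀ) A S * subdet (KinvMix m Und) S T
        * subdet ((LamMix m Dir)⁻¹) T B = 0)
    ∧ subdet (((LamMix m Dir)⁻¹)ᵀ * KinvMix m Und * (LamMix m Dir)⁻¹) A B = 0 := by
  refine ⟨?minors, subdet_mul_mul_eq_zero hAB ?minors⟩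
  intro S T hS _
  by_contra hne
  have hAS := left_ne_zero_of_mul (left_ne_zero_of_mul hne)
  rw [subdet_transpose] at hAS
  obtain ⟨L⟩ := nonempty_disjointPaths_of_subdet_lamMix_inv_ne_zero hAS
  obtain ⟨M⟩ := nonempty_disjointPaths_of_subdet_kinvMix_ne_zero
    (right_ne_zero_of_mul (left_ne_zero_of_mul hne))
  obtain ⟨R⟩ := nonempty_disjointPaths_of_subdet_lamMix_inv_ne_zero (right_ne_zero_of_mul hne)
  obtain ⟨τ, PL, PM, PR, sL, sR, hpaths, hL, hM, hR⟩ :=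
    exists_treks_of_disjointPaths hAB.symm hS.ge L M R
  rcases hcross τ PL PM PR sL sR hpaths with
    ⟨i, j, hij, v, hvi, hvj⟩ | ⟨i, j, hij, v, hvi, hvj⟩ | ⟨i, j, hij, v, hvi, hvj⟩
  · exact hL i j hij v hvi hvj
  · exact hM i j hij v hvi hvj
  · exact hR i j hij v hvi hvj

/-- **Sided crossings force vanishing minors in mixed graphs.** For a mixed graph
with directed edges `Dir` and undirected edges `Und`, generic `Λ` and `K`, and
`Σ = Λ⁻ᵀ K⁻¹ Λ⁻¹`: if every system of `r = #A = #B` treks from `A` to `B` has a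
sided crossing, then for all `S`, `T` with `#S = #T = r` the product
`det(Λ⁻ᵀ)_{A,S} ⋅ det(K⁻¹)_{S,T} ⋅ det(Λ⁻¹)_{T,B}` is identically zero, and
consequently `det Σ_{A,B} = 0`. -/
theorem stmt19 (m : ℕ) (Dir Und : Fin m → Fin m → Prop)
    [DecidableRel Dir] [DecidableRel Und]
    (hDir : ∀ i j : Fin m, Dir i j → i < j)
    (hUndSym : ∀ i j : Fin m, Und i j → Und j i)
    (A B : Finset (Fin m)) (hAB : A.card = B.card)
    (hcross : ∀ (τ : Equiv.Perm (Fin A.card))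
        (PL PM PR : Fin A.card → List (Fin m)) (sL sR : Fin A.card → Fin m),
        (∀ i, IsPath Dir (PL i) (sL i) ((A.orderIsoOfFin rfl) i).1
          ∧ IsPath Und (PM i) (sL i) (sR i)
          ∧ IsPath Dir (PR i) (sR i) ((B.orderIsoOfFin hAB.symm) (τ i)).1) →
        (∃ i j, i ≠ j ∧ ∃ v, v ∈ PL i ∧ v ∈ PL j)
          ∨ (∃ i j, i ≠ j ∧ ∃ v, v ∈ PM i ∧ v ∈ PM j)
          ∨ (∃ i j, i ≠ j ∧ ∃ v, v ∈ PR i ∧ v ∈ PR j)) :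
    (∀ S T : Finset (Fin m), S.card = A.card → T.card = A.card →
      subdet (((LamMix m Dir)⁻¹)ᵀ) A S * subdet (KinvMix m Und) S T
        * subdet ((LamMix m Dir)⁻¹) T B = 0)
    ∧ subdet (((LamMix m Dir)⁻¹)ᵀ * KinvMix m Und * (LamMix m Dir)⁻¹) A B = 0 :=
  stmt19_general m Dir Und A B hAB hcross
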